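/- Uniform coercivity of the symmetric Nitsche bilinear form: for every γ > 1/2 there exists C > 0 such that for every integer N ≥ 1 and every real polynomial ψ of degree at most N with ψ(−1) = 0, one has ∫_{-1}^{1} ψ'(x)² dx − 2·ψ'(1)·ψ(1) + γ·N²·ψ(1)² ≥ C·( ∫_{-1}^{1} ψ'(x)² dx + N²·ψ(1)² ). The constant C depends only on γ, not on N. -/

import Mathlib

/-!
Expanding a polynomial `p` of degree `< n` in Legendre polynomials, `p(1) = ∑ cₖ` and
`∫ p² = ∑ cₖ² · 2/(2k+1)`, so Cauchy–Schwarz gives the sharp trace inequality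
`p(1)² ≤ (n²/2) ∫ p²`, as `∑_{k<n} (2k+1)/2 = n²/2`. Applied to `ψ'` (degree `< N`),
it lets Young's inequality absorb the cross term `2ψ'(1)ψ(1)`, and `γ > 1/2` leaves a positive
fraction of both `∫ ψ'²` and `N²ψ(1)²`.
-/

open Polynomial

open Nat Finset MeasureTheory

namespace Polynomial

variable {R : Type*}

theorem natDegree_iterate_derivative_eq [Semiring R] [IsAddTorsionFree R] (p : R[X]) (k : ℕ) :
    (derivative^[k] p).natDegree = p.natDegree - k := by
  induction k with
  | zero => simp
  | succ k ih => rw [Function.iterate_succ_apply', natDegree_derivative, ih, Nat.sub_sub]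

theorem eval_iterate_derivative_eq_zero_of_pow_dvd [CommRing R] {p : R[X]} {t : R} {n j : ℕ}
    (h : (X - C t) ^ n ∣ p) (hj : j < n) : (derivative^[j] p).eval t = 0 :=
  dvd_iff_isRoot.mp <| (dvd_pow_self _ (Nat.sub_ne_zero_of_lt hj)).trans
    (pow_sub_dvd_iterate_derivative_of_pow_dvd _ h)

theorem eval_iterate_derivative_X_sub_C_pow_mul [CommRing R] (t : R) (n : ℕ) (q : R[X]) :
    (derivative^[n] ((X - C t) ^ n * q)).eval t = n ! * q.eval t := by
  rw [iterate_derivative_mul, eval_finsetSum, sum_eq_single_of_mem 0 (mem_range.mpr n.succ_pos)]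
  · simp [iterate_derivative_X_sub_pow_self]
  · intro k hk hk0
    rw [iterate_derivative_X_sub_pow, eval_smul, eval_mul, eval_smul, eval_pow,
      Nat.sub_sub_self (mem_range_succ_iff.mp hk), eval_sub, eval_X, eval_C, sub_self,
      zero_pow hk0, smul_zero, zero_mul, smul_zero]

theorem integral_eval_mul_eval_iterate_derivative {a b : ℝ} {n : ℕ} {w : ℝ[X]}
    (ha : ∀ j < n, (derivative^[j] w).eval a = 0) (hb : ∀ j < n, (derivative^[j] w).eval b = 0)
    (q : ℝ[X]) :
    ∫ x in a..b, q.eval x * (derivative^[n] w).eval x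
      = (-1) ^ n * ∫ x in a..b, (derivative^[n] q).eval x * w.eval x := by
  induction n generalizing q with
  | zero => simp
  | succ n ih =>
    rw [Function.iterate_succ_apply', Function.iterate_succ_apply,
      intervalIntegral.integral_mul_deriv_eq_deriv_mul (fun x _ => q.hasDerivAt x)
        (fun x _ => (derivative^[n] w).hasDerivAt x)
        (q.derivative.continuous.intervalIntegrable _ _)
        ((derivative^[n] w).derivative.continuous.intervalIntegrable _ _),
      ha n n.lt_succ_self, hb n n.lt_succ_self,
      ih (fun j hj => ha j (by omega)) (fun j hj => hb j (by omega))]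
    ring

end Polynomial

theorem integral_one_sub_sq_pow_succ (n : ℕ) :
    (2 * (n : ℝ) + 3) * ∫ x in (-1 : ℝ)..1, (1 - x ^ 2) ^ (n + 1)
      = (2 * (n : ℝ) + 2) * ∫ x in (-1 : ℝ)..1, (1 - x ^ 2) ^ n := by
  have hderiv : ∀ x : ℝ, HasDerivAt (fun x => x * (1 - x ^ 2) ^ (n + 1))
      ((2 * n + 3) * (1 - x ^ 2) ^ (n + 1) - (2 * n + 2) * (1 - x ^ 2) ^ n) x := by
    intro x
    refine ((hasDerivAt_id' x).fun_mul
      (((hasDerivAt_pow 2 x).const_sub 1).fun_pow (n + 1))).congr_deriv ?_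
    simp only [Nat.add_sub_cancel]
    push_cast
    ring
  have hint : ∀ m : ℕ, IntervalIntegrable (fun x : ℝ => (1 - x ^ 2) ^ m) volume (-1) 1 :=
    fun m => (by fun_prop : Continuous _).intervalIntegrable _ _
  have := intervalIntegral.integral_eq_sub_of_hasDerivAt (fun x _ => hderiv x)
    (((hint (n + 1)).const_mul _).sub ((hint n).const_mul _))
  rw [intervalIntegral.integral_sub ((hint (n + 1)).const_mul _) ((hint n).const_mul _),
    intervalIntegral.integral_const_mul, intervalIntegral.integral_const_mul] at this
  norm_num at this
  linarith

theorem integral_one_sub_sq_pow (n : ℕ) :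
    (2 * (n : ℝ) + 1) * (2 * n)! * ∫ x in (-1 : ℝ)..1, (1 - x ^ 2) ^ n
      = 2 * 4 ^ n * (n ! : ℝ) ^ 2 := by
  induction n with
  | zero => norm_num
  | succ n ih =>
    rw [show 2 * (n + 1) = 2 * n + 1 + 1 by ring]
    push_cast [factorial_succ]
    linear_combination (2 * (n : ℝ) + 2) * (2 * n + 1) * (2 * n)! * integral_one_sub_sq_pow_succ n
      + (2 * (n : ℝ) + 2) ^ 2 * ih

theorem X_sq_sub_one_pow_eq (n : ℕ) :
    ((X : ℝ[X]) ^ 2 - 1) ^ n = (X - C 1) ^ n * (X - C (-1)) ^ n := by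
  rw [← mul_pow]
  congr 1
  simp only [map_one, map_neg, sub_neg_eq_add]
  ring

theorem natDegree_X_sq_sub_one_pow (n : ℕ) : (((X : ℝ[X]) ^ 2 - 1) ^ n).natDegree = 2 * n := by
  rw [natDegree_pow, ← C_1, natDegree_X_pow_sub_C, mul_comm]

theorem iterate_derivative_X_sq_sub_one_pow_eval_eq_zero {n j : ℕ} (hj : j < n) {t : ℝ}
    (ht : t = 1 ∨ t = -1) : (derivative^[j] (((X : ℝ[X]) ^ 2 - 1) ^ n)).eval t = 0 := by
  refine eval_iterate_derivative_eq_zero_of_pow_dvd ?_ hj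
  rw [X_sq_sub_one_pow_eq]
  rcases ht with rfl | rfl
  · exact dvd_mul_right _ _
  · exact dvd_mul_left _ _

theorem iterate_derivative_X_sq_sub_one_pow_two_mul (n : ℕ) :
    derivative^[2 * n] (((X : ℝ[X]) ^ 2 - 1) ^ n) = C ((2 * n)! : ℝ) := by
  have hdeg : (derivative^[2 * n] (((X : ℝ[X]) ^ 2 - 1) ^ n)).natDegree = 0 := by
    rw [natDegree_iterate_derivative_eq, natDegree_X_sq_sub_one_pow, Nat.sub_self]
  rw [eq_C_of_natDegree_eq_zero hdeg, coeff_iterate_derivative, zero_add]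
  have hmonic : (((X : ℝ[X]) ^ 2 - 1) ^ n).Monic := by
    rw [← C_1]
    exact (monic_X_pow_sub_C 1 two_ne_zero).pow n
  rw [← natDegree_X_sq_sub_one_pow n, hmonic.coeff_natDegree, natDegree_X_sq_sub_one_pow]
  simp [Nat.descFactorial_self]

noncomputable def legendre (n : ℕ) : ℝ[X] :=
  C (2 ^ n * n ! : ℝ)⁻¹ * derivative^[n] ((X ^ 2 - 1) ^ n)

theorem legendre_eval_one (n : ℕ) : (legendre n).eval 1 = 1 := by
  rw [legendre, eval_mul, eval_C, X_sq_sub_one_pow_eq, eval_iterate_derivative_X_sub_C_pow_mul]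
  field_simp
  norm_num

theorem degree_legendre (n : ℕ) : (legendre n).degree = n := by
  have hne : legendre n ≠ 0 := fun h => by simpa [h] using legendre_eval_one n
  rw [degree_eq_natDegree hne, legendre, natDegree_C_mul (by positivity),
    natDegree_iterate_derivative_eq, natDegree_X_sq_sub_one_pow]
  norm_cast
  omega

noncomputable def legendreSequence : Polynomial.Sequence ℝ := ⟨legendre, degree_legendre⟩

theorem exists_eq_sum_smul_legendre {p : ℝ[X]} {n : ℕ} (hp : p.degree < n) :
    ∃ c : ℕ → ℝ, p = ∑ k ∈ range n, c k • legendre k := by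
  have hspan : p ∈ Submodule.span ℝ (legendreSequence '' ↑(range n)) := by
    rw [coe_range, legendreSequence.span_degreeLT fun i _ =>
      (leadingCoeff_ne_zero.mpr (legendreSequence.ne_zero i)).isUnit]
    exact mem_degreeLT.mpr hp
  obtain ⟨c, hc⟩ := (Submodule.mem_span_image_finset_iff_exists_fun' ℝ).mp hspan
  exact ⟨c, hc.symm⟩

theorem integral_eval_mul_legendre (q : ℝ[X]) (n : ℕ) :
    ∫ x in (-1 : ℝ)..1, q.eval x * (legendre n).eval x
      = (2 ^ n * n ! : ℝ)⁻¹ * (-1) ^ n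
        * ∫ x in (-1 : ℝ)..1,
            (derivative^[n] q).eval x * (((X : ℝ[X]) ^ 2 - 1) ^ n).eval x := by
  simp only [legendre, eval_mul, eval_C, mul_left_comm (q.eval _)]
  rw [intervalIntegral.integral_const_mul, integral_eval_mul_eval_iterate_derivative
    (fun j hj => iterate_derivative_X_sq_sub_one_pow_eval_eq_zero hj (.inr rfl))
    (fun j hj => iterate_derivative_X_sq_sub_one_pow_eval_eq_zero hj (.inl rfl)), mul_assoc]

theorem integral_eval_mul_legendre_eq_zero {q : ℝ[X]} {n : ℕ} (hq : q.degree < n) :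
    ∫ x in (-1 : ℝ)..1, q.eval x * (legendre n).eval x = 0 := by
  simp [integral_eval_mul_legendre, iterate_derivative_eq_zero_of_degree_lt hq]

theorem integral_legendre_mul_self (n : ℕ) :
    ∫ x in (-1 : ℝ)..1, (legendre n).eval x * (legendre n).eval x = 2 / (2 * n + 1) := by
  have hder : derivative^[n] (legendre n) = C ((2 ^ n * n ! : ℝ)⁻¹ * (2 * n)!) := by
    rw [legendre, iterate_derivative_C_mul, ← Function.iterate_add_apply, ← two_mul,
      iterate_derivative_X_sq_sub_one_pow_two_mul, C_mul]
  have hW : ∀ x : ℝ, (((X : ℝ[X]) ^ 2 - 1) ^ n).eval x = (-1) ^ n * (1 - x ^ 2) ^ n := by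
    intro x
    simp only [eval_pow, eval_sub, eval_X, eval_one, ← mul_pow]
    ring
  simp only [integral_eval_mul_legendre, hder, eval_C, hW, mul_left_comm _ ((-1 : ℝ) ^ n)]
  rw [intervalIntegral.integral_const_mul, intervalIntegral.integral_const_mul]
  have hJ := integral_one_sub_sq_pow n
  rw [show (4 : ℝ) = 2 * 2 by norm_num, mul_pow] at hJ
  rw [mul_assoc, ← mul_assoc ((-1 : ℝ) ^ n), ← mul_pow, neg_one_mul, neg_neg, one_pow,
    one_mul, eq_div_iff (by positivity)]
  field_simp
  linear_combination hJ

theorem integral_legendre_mul_legendre (j k : ℕ) :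
    ∫ x in (-1 : ℝ)..1, (legendre j).eval x * (legendre k).eval x
      = if j = k then 2 / (2 * k + 1 : ℝ) else 0 := by
  rcases lt_trichotomy j k with h | rfl | h
  · rw [if_neg h.ne,
      integral_eval_mul_legendre_eq_zero (by rw [degree_legendre]; exact_mod_cast h)]
  · rw [if_pos rfl, integral_legendre_mul_self]
  · simp_rw [if_neg h.ne', mul_comm ((legendre j).eval _)]
    exact integral_eval_mul_legendre_eq_zero (by rw [degree_legendre]; exact_mod_cast h)

theorem integral_sum_smul_legendre_sq (c : ℕ → ℝ) (n : ℕ) :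
    ∫ x in (-1 : ℝ)..1, (∑ k ∈ range n, c k • legendre k).eval x ^ 2
      = ∑ k ∈ range n, c k ^ 2 * (2 / (2 * k + 1)) := by
  have hint : ∀ j k, IntervalIntegrable
      (fun x => c j * c k * ((legendre j).eval x * (legendre k).eval x)) volume (-1) 1 :=
    fun j k => (by fun_prop : Continuous _).intervalIntegrable _ _
  have hexpand : ∀ x, (∑ k ∈ range n, c k • legendre k).eval x ^ 2
      = ∑ j ∈ range n, ∑ k ∈ range n,
          c j * c k * ((legendre j).eval x * (legendre k).eval x) := by
    intro x
    simp only [eval_finsetSum, eval_smul, smul_eq_mul, sq, sum_mul_sum, mul_mul_mul_comm]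
  rw [intervalIntegral.integral_congr fun x _ => hexpand x,
    intervalIntegral.integral_finsetSum fun j _ =>
      (by fun_prop : Continuous _).intervalIntegrable _ _]
  simp_rw [intervalIntegral.integral_finsetSum fun k _ => hint _ k,
    intervalIntegral.integral_const_mul, integral_legendre_mul_legendre, mul_ite, mul_zero,
    sum_ite_eq]
  exact sum_congr rfl fun k hk => by rw [if_pos hk, sq]

theorem sq_eval_one_le_of_degree_lt {p : ℝ[X]} {n : ℕ} (hp : p.degree < n) :
    p.eval 1 ^ 2 ≤ n ^ 2 / 2 * ∫ x in (-1 : ℝ)..1, p.eval x ^ 2 := by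
  have hsum : ∀ m : ℕ, ∑ k ∈ range m, (2 * k + 1 : ℝ) / 2 = m ^ 2 / 2 := by
    intro m
    induction m with
    | zero => simp
    | succ m ih => rw [sum_range_succ, ih]; push_cast; ring
  obtain ⟨c, rfl⟩ := exists_eq_sum_smul_legendre hp
  rw [integral_sum_smul_legendre_sq, ← hsum]
  simp only [eval_finsetSum, eval_smul, legendre_eval_one, smul_eq_mul, mul_one]
  refine sum_sq_le_sum_mul_sum_of_sq_le_mul _ (fun k _ => by positivity)
    (fun k _ => by positivity) fun k _ => le_of_eq ?_
  field_simp

theorem nitsche_coercivity_of_trace_ineq {γ M D a b : ℝ} (hγ : 1 / 2 < γ) (hM : 0 < M)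
    (hD : 0 ≤ D) (hb : b ^ 2 ≤ M / 2 * D) :
    (2 * γ - 1) / (4 * γ + 2) * (D + M * a ^ 2) ≤ D - 2 * b * a + γ * M * a ^ 2 := by
  have hγ' : 0 < 2 * γ - 1 := by linarith
  have hb' : 0 ≤ M / 2 * D - b ^ 2 := by linarith
  -- Young's inequality `2ba ≤ b² / (tM) + tMa²` with `t = (2γ + 1) / 4 ∈ (1/2, γ)`.
  calc (2 * γ - 1) / (4 * γ + 2) * (D + M * a ^ 2)
      = D - 2 * b * a + γ * M * a ^ 2
          - ((b - (2 * γ + 1) / 4 * M * a) ^ 2 + (M / 2 * D - b ^ 2)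
            + (2 * γ - 1) / 8 * M * D + (2 * γ - 1) ^ 2 / 16 * M ^ 2 * a ^ 2)
          / ((2 * γ + 1) / 4 * M) := by
        field_simp
        ring
    _ ≤ D - 2 * b * a + γ * M * a ^ 2 := sub_le_self _ (by positivity)

/-- Uniform coercivity of the symmetric Nitsche bilinear form: for every
`γ > 1/2` there is a constant `C > 0`, independent of `N`, such that for every
`N ≥ 1` and every polynomial `ψ` of degree at most `N` with `ψ(−1) = 0`,
`A_N(ψ,ψ) ≥ C·(∫ψ'² + N²ψ(1)²)`. -/
theorem nitsche_symmetric_uniform_coercivity :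
    ∀ γ : ℝ, 1 / 2 < γ → ∃ C > 0, ∀ N : ℕ, 1 ≤ N →
      ∀ ψ : Polynomial ℝ, ψ.degree ≤ N → ψ.eval (-1) = 0 →
        (∫ x in (-1 : ℝ)..1, (ψ.derivative.eval x) ^ 2)
            - 2 * ψ.derivative.eval 1 * ψ.eval 1 + γ * (N : ℝ) ^ 2 * (ψ.eval 1) ^ 2
          ≥ C * ((∫ x in (-1 : ℝ)..1, (ψ.derivative.eval x) ^ 2)
              + (N : ℝ) ^ 2 * (ψ.eval 1) ^ 2) := by
  intro γ hγ
  refine ⟨(2 * γ - 1) / (4 * γ + 2), div_pos (by linarith) (by linarith), ?_⟩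
  intro N hN ψ hψ _
  have hdegree : ψ.derivative.degree < N := by
    rcases eq_or_ne ψ 0 with rfl | hψ0
    · simp
    · exact (degree_derivative_lt hψ0).trans_le hψ
  exact nitsche_coercivity_of_trace_ineq hγ (by positivity)
    (intervalIntegral.integral_nonneg (by norm_num) fun x _ => sq_nonneg _)
    (sq_eval_one_le_of_degree_lt hdegree)
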